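/- For every pairwise reciprocal matrix A of size n ≥ 1 and every real r > 0, the matrix Ḡ + r·J is positive definite; in particular it is invertible. -/

import Mathlib

open Matrix BigOperators

/-- A pairwise reciprocal matrix (PRM): all entries positive and `A i j * A j i = 1`. -/
def IsPRM {n : ℕ} (A : Matrix (Fin n) (Fin n) ℝ) : Prop :=
  ∀ i j, 0 < A i j ∧ A i j * A j i = 1

/-- The matrix `Ḡ` with diagonal `(n-1) + ∑_{k ≠ i} (A k i)^2` and
off-diagonal `-(A i j + A j i)`. -/
noncomputable def Gbar {n : ℕ} (A : Matrix (Fin n) (Fin n) ℝ) :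
    Matrix (Fin n) (Fin n) ℝ :=
  Matrix.of fun i j =>
    if i = j then ((n : ℝ) - 1) + ∑ k ∈ Finset.univ.filter (fun k => k ≠ i), (A k i) ^ 2
    else -(A i j + A j i)

/-- The all-ones matrix `J`. -/
noncomputable def Jmat (n : ℕ) : Matrix (Fin n) (Fin n) ℝ :=
  Matrix.of fun _ _ => 1

/-- `G = Ḡ + J`. -/
noncomputable def Gmat {n : ℕ} (A : Matrix (Fin n) (Fin n) ℝ) :
    Matrix (Fin n) (Fin n) ℝ :=
  Gbar A + Jmat n

/-- The weighted least squares objective `f(w) = ∑ i ∑ j (w i - A i j * w j)^2`. -/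
noncomputable def wls {n : ℕ} (A : Matrix (Fin n) (Fin n) ℝ) (w : Fin n → ℝ) : ℝ :=
  ∑ i, ∑ j, (w i - A i j * w j) ^ 2

/-!
When the diagonal of `A` is one, `Ḡ = diag(n + ∑ₖ aₖᵢ²) - (A + Aᵀ)`, and expanding the squares
shows that `xᵀ Ḡ x` is the least squares objective `∑ᵢ ∑ⱼ (xᵢ - aᵢⱼ xⱼ)²`, while `xᵀ J x = (∑ᵢ xᵢ)²`.
Both forms are nonnegative. If both vanish, then `xᵢ = aᵢⱼ xⱼ` for all `i, j`; summing over `i`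
gives `(∑ᵢ aᵢⱼ) xⱼ = ∑ᵢ xᵢ = 0`, and positivity of the column sums forces `x = 0`.
-/

namespace IsPRM

variable {n : ℕ} {A : Matrix (Fin n) (Fin n) ℝ}

theorem pos (hA : IsPRM A) (i j : Fin n) : 0 < A i j := (hA i j).1

theorem diag_eq_one (hA : IsPRM A) (i : Fin n) : A i i = 1 := by
  nlinarith [hA.pos i i, (hA i i).2]

end IsPRM

section

variable {n : ℕ} (A : Matrix (Fin n) (Fin n) ℝ)

theorem Gbar_transpose : (Gbar A)ᵀ = Gbar A := by
  ext i j
  by_cases h : i = j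
  · subst h; rfl
  · simp [Gbar, h, Ne.symm h, add_comm]

theorem Jmat_transpose : (Jmat n)ᵀ = Jmat n := rfl

theorem Gbar_eq_diagonal_sub_add_transpose (hA : ∀ i, A i i = 1) :
    Gbar A = diagonal (fun i => n + ∑ k, A k i ^ 2) - (A + Aᵀ) := by
  ext i j
  by_cases h : i = j
  · subst h
    have herase : Finset.univ.filter (fun k => k ≠ i) = Finset.univ.erase i := by
      ext k; simp [and_comm]
    simp only [Gbar, of_apply, if_true, Matrix.sub_apply, diagonal_apply_eq, Matrix.add_apply,
      transpose_apply, herase, Finset.sum_erase_eq_sub (Finset.mem_univ i), hA i]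
    ring
  · simp [Gbar, h]

theorem wls_eq_dotProduct_mulVec (x : Fin n → ℝ) :
    wls A x = x ⬝ᵥ ((diagonal (fun i => n + ∑ k, A k i ^ 2) - (A + Aᵀ)) *ᵥ x) := by
  have hdiag (d : Fin n → ℝ) : x ⬝ᵥ (diagonal d *ᵥ x) = ∑ i, d i * x i ^ 2 :=
    Finset.sum_congr rfl fun i _ => by rw [mulVec_diagonal]; ring
  have htranspose : x ⬝ᵥ (Aᵀ *ᵥ x) = x ⬝ᵥ (A *ᵥ x) := by
    rw [dotProduct_mulVec, vecMul_transpose, dotProduct_comm]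
  have hsq : ∑ i, ∑ j, (A i j * x j) ^ 2 = ∑ j, (∑ i, A i j ^ 2) * x j ^ 2 := by
    rw [Finset.sum_comm]
    simp only [Finset.sum_mul, mul_pow]
  rw [sub_mulVec, add_mulVec, dotProduct_sub, dotProduct_add, htranspose, hdiag]
  simp only [wls, sub_sq, Finset.sum_add_distrib, Finset.sum_sub_distrib, hsq, dotProduct, mulVec,
    Finset.sum_const, Finset.card_univ, Fintype.card_fin, nsmul_eq_mul, add_mul]
  simp only [mul_assoc, ← Finset.mul_sum]
  ring

theorem dotProduct_Gbar_mulVec (hA : ∀ i, A i i = 1) (x : Fin n → ℝ) :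
    x ⬝ᵥ (Gbar A *ᵥ x) = wls A x := by
  rw [Gbar_eq_diagonal_sub_add_transpose A hA, wls_eq_dotProduct_mulVec]

theorem dotProduct_Jmat_mulVec (x : Fin n → ℝ) : x ⬝ᵥ (Jmat n *ᵥ x) = (∑ i, x i) ^ 2 := by
  simp [Jmat, dotProduct, mulVec, sq, Finset.sum_mul]

theorem wls_nonneg (x : Fin n → ℝ) : 0 ≤ wls A x := by
  unfold wls; positivity

theorem wls_eq_zero_iff (x : Fin n → ℝ) : wls A x = 0 ↔ ∀ i j, x i = A i j * x j := by
  simp [wls, Finset.sum_eq_zero_iff_of_nonneg, sq_nonneg, Finset.sum_nonneg, sub_eq_zero]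

theorem eq_zero_of_wls_eq_zero {A : Matrix (Fin n) (Fin n) ℝ} (hpos : ∀ i j, 0 < A i j)
    {x : Fin n → ℝ} (hx : wls A x = 0) (hsum : ∑ i, x i = 0) : x = 0 := by
  funext j
  have hcol : 0 < ∑ i, A i j := Finset.sum_pos (fun i _ => hpos i j) ⟨j, Finset.mem_univ j⟩
  have : (∑ i, A i j) * x j = 0 := by
    rw [Finset.sum_mul, ← hsum]
    exact Finset.sum_congr rfl fun i _ => ((wls_eq_zero_iff A x).1 hx i j).symm
  simpa [hcol.ne'] using this

end

theorem Gbar_add_smul_J_posDef_general {n : ℕ}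
    (A : Matrix (Fin n) (Fin n) ℝ) (hA : IsPRM A) (r : ℝ) (hr : 0 < r) :
    (Gbar A + r • Jmat n).PosDef ∧ IsUnit (Gbar A + r • Jmat n) := by
  have hherm : (Gbar A + r • Jmat n).IsHermitian := by
    simp [IsHermitian, conjTranspose_eq_transpose_of_trivial, Gbar_transpose, Jmat_transpose]
  have hpd : (Gbar A + r • Jmat n).PosDef := by
    refine PosDef.of_dotProduct_mulVec_pos hherm fun x hx => ?_
    rw [star_trivial, add_mulVec, dotProduct_add, smul_mulVec, dotProduct_smul, smul_eq_mul,
      dotProduct_Gbar_mulVec A hA.diag_eq_one, dotProduct_Jmat_mulVec]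
    rcases eq_or_ne (∑ i, x i) 0 with hs | hs
    · have hw : 0 < wls A x :=
        (wls_nonneg A x).lt_of_ne fun hw => hx (eq_zero_of_wls_eq_zero hA.pos hw.symm hs)
      simpa [hs] using hw
    · have hJ : 0 < r * (∑ i, x i) ^ 2 := by positivity
      linarith [wls_nonneg A x]
  exact ⟨hpd, hpd.isUnit⟩

/-- for every PRM `A` of size `n ≥ 1` and every real `r > 0`, the matrix
`Ḡ + r·J` is positive definite; in particular it is invertible. -/
theorem Gbar_add_smul_J_posDef {n : ℕ} (hn : 1 ≤ n)
    (A : Matrix (Fin n) (Fin n) ℝ) (hA : IsPRM A) (r : ℝ) (hr : 0 < r) :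
    (Gbar A + r • Jmat n).PosDef ∧ IsUnit (Gbar A + r • Jmat n) :=
  Gbar_add_smul_J_posDef_general A hA r hr
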